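/- arXiv:0806.4979 — 9 statements merged into one kernel-verified Lean document; each statement's English description precedes it below -/
import Mathlib

section
/- Let G be a finite simple graph that is vertex transitive (for any two vertices u, v of G there exists a graph automorphism of G mapping u to v). Then the product of the independence number of G and the clique number of G is at most the number of vertices of G: α(G)·ω(G) ≤ |V(G)|. -/
/-- The independence number of a simple graph: the largest number of vertices
no two of which are adjacent. -/
noncomputable def indepNum {V : Type*} [Fintype V] (G : SimpleGraph V) : ℕ :=
  sSup {k | ∃ s : Finset V, s.card = k ∧ ∀ u ∈ s, ∀ v ∈ s, ¬ G.Adj u v}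

/-- The clique number of a simple graph: the largest number of pairwise adjacent
vertices. -/
noncomputable def cliqueNum {V : Type*} [Fintype V] (G : SimpleGraph V) : ℕ :=
  sSup {k | ∃ s : Finset V, s.card = k ∧ ∀ u ∈ s, ∀ v ∈ s, u ≠ v → G.Adj u v}

/-- For a finite vertex transitive simple graph `G`,
`α(G) · ω(G) ≤ |V(G)|`. -/
theorem indepNum_mul_cliqueNum_le_card {V : Type*} [Fintype V] (G : SimpleGraph V)
    (hvt : ∀ u v : V, ∃ φ : G ≃g G, φ u = v) :
    indepNum G * cliqueNum G ≤ Fintype.card V := by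
  classical
  have hAmem : indepNum G ∈
      {k | ∃ s : Finset V, s.card = k ∧ ∀ u ∈ s, ∀ v ∈ s, ¬ G.Adj u v} := by
    apply Nat.sSup_mem
    · exact ⟨0, ∅, by simp⟩
    · exact ⟨Fintype.card V, fun k ⟨s, hs, _⟩ => hs ▸ Finset.card_le_univ s⟩
  obtain ⟨A, hAcard, hAind⟩ := hAmem
  have hCmem : cliqueNum G ∈
      {k | ∃ s : Finset V, s.card = k ∧ ∀ u ∈ s, ∀ v ∈ s, u ≠ v → G.Adj u v} := by
    apply Nat.sSup_mem
    · exact ⟨0, ∅, by simp⟩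
    · exact ⟨Fintype.card V, fun k ⟨s, hs, _⟩ => hs ▸ Finset.card_le_univ s⟩
  obtain ⟨C, hCcard, hCcl⟩ := hCmem
  rcases isEmpty_or_nonempty V with hV | hV
  · have hA : A = ∅ := Finset.eq_empty_of_isEmpty A
    simp [← hAcard, hA]
  obtain ⟨a₀⟩ := hV
  set Γ : Finset (V ≃ V) :=
    Finset.univ.filter (fun π => ∀ u v : V, G.Adj (π u) (π v) ↔ G.Adj u v) with hΓ
  set fib : V → V → ℕ := fun a c => (Γ.filter (fun π => π a = c)).card with hfib
  -- all fibers have the same size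
  have hfib_eq : ∀ a b c d : V, fib a c = fib b d := by
    intro a b c d
    obtain ⟨ψ, hψ⟩ := hvt b a
    obtain ⟨σ, hσ⟩ := hvt c d
    have hψadj : ∀ u v, G.Adj (ψ.toEquiv u) (ψ.toEquiv v) ↔ G.Adj u v := fun u v => ψ.map_adj_iff
    have hσadj : ∀ u v, G.Adj (σ.toEquiv u) (σ.toEquiv v) ↔ G.Adj u v := fun u v => σ.map_adj_iff
    apply Finset.card_bij' (fun π _ => (ψ.toEquiv.trans π).trans σ.toEquiv)
      (fun π _ => (ψ.toEquiv.symm.trans π).trans σ.toEquiv.symm)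
    · intro π hπ
      simp only [hΓ, Finset.mem_filter, Finset.mem_univ, true_and] at hπ ⊢
      obtain ⟨hπ1, hπ2⟩ := hπ
      refine ⟨fun u v => ?_, ?_⟩
      · simp only [Equiv.trans_apply]
        rw [hσadj, hπ1, hψadj]
      · simp [Equiv.trans_apply, hψ, hπ2, hσ]
    · intro π hπ
      simp only [hΓ, Finset.mem_filter, Finset.mem_univ, true_and] at hπ ⊢
      obtain ⟨hπ1, hπ2⟩ := hπ
      refine ⟨fun u v => ?_, ?_⟩
      · simp only [Equiv.trans_apply]
        rw [← hσadj, Equiv.apply_symm_apply, Equiv.apply_symm_apply, hπ1, ← hψadj,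
          Equiv.apply_symm_apply, Equiv.apply_symm_apply]
      · have h1 : ψ.toEquiv.symm a = b := by
          rw [← hψ]; exact ψ.toEquiv.symm_apply_apply b
        have h2 : σ.toEquiv.symm d = c := by
          rw [← hσ]; exact σ.toEquiv.symm_apply_apply c
        simp [Equiv.trans_apply, h1, hπ2, h2]
    · intro π _
      ext x
      simp only [Equiv.trans_apply, Equiv.symm_apply_apply, Equiv.apply_symm_apply]
    · intro π _
      ext x
      simp only [Equiv.trans_apply, Equiv.symm_apply_apply, Equiv.apply_symm_apply]
  -- the fiber over the base point is nonempty
  have hs_pos : 0 < fib a₀ a₀ := by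
    rw [hfib]
    refine Finset.card_pos.2 ⟨Equiv.refl V, ?_⟩
    simp [hΓ]
  -- |Γ| = n * s
  have hΓcard : Γ.card = Fintype.card V * fib a₀ a₀ := by
    rw [Finset.card_eq_sum_card_fiberwise
      (f := fun π : V ≃ V => π a₀) (t := Finset.univ) (fun x _ => Finset.mem_univ _)]
    rw [Finset.sum_congr rfl (fun c _ => (hfib_eq a₀ a₀ c a₀ : fib a₀ c = fib a₀ a₀))]
    rw [Finset.sum_const, Finset.card_univ, smul_eq_mul]
  -- each translated independent set meets the clique at most once
  have h1 : ∀ π ∈ Γ, ((A.image (π : V → V)) ∩ C).card ≤ 1 := by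
    intro π hπ
    simp only [hΓ, Finset.mem_filter, Finset.mem_univ, true_and] at hπ
    refine Finset.card_le_one.2 fun u hu v hv => ?_
    by_contra huv
    simp only [Finset.mem_inter, Finset.mem_image] at hu hv
    obtain ⟨⟨a, ha, rfl⟩, huC⟩ := hu
    obtain ⟨⟨b, hb, rfl⟩, hvC⟩ := hv
    exact hAind a ha b hb ((hπ a b).1 (hCcl _ huC _ hvC huv))
  -- double counting
  have key : A.card * C.card * fib a₀ a₀ ≤ Γ.card := by
    calc A.card * C.card * fib a₀ a₀
        = ∑ a ∈ A, ∑ c ∈ C, fib a c := by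
          rw [Finset.sum_congr rfl (fun a _ => Finset.sum_congr rfl
            (fun c _ => (hfib_eq a a₀ c a₀ : fib a c = fib a₀ a₀)))]
          simp [Finset.sum_const, mul_assoc]
      _ = ∑ a ∈ A, ∑ c ∈ C, ∑ π ∈ Γ, (if π a = c then 1 else 0) := by
          refine Finset.sum_congr rfl fun a _ => Finset.sum_congr rfl fun c _ => ?_
          rw [hfib]
          exact Finset.card_filter _ _
      _ = ∑ a ∈ A, ∑ π ∈ Γ, ∑ c ∈ C, (if π a = c then 1 else 0) :=
          Finset.sum_congr rfl fun a _ => Finset.sum_comm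
      _ = ∑ π ∈ Γ, ∑ a ∈ A, ∑ c ∈ C, (if π a = c then 1 else 0) := Finset.sum_comm
      _ = ∑ π ∈ Γ, ∑ a ∈ A, (if π a ∈ C then 1 else 0) := by
          refine Finset.sum_congr rfl fun π _ => Finset.sum_congr rfl fun a _ => ?_
          exact Finset.sum_ite_eq C (π a) (fun _ => 1)
      _ = ∑ π ∈ Γ, (A.filter (fun a => π a ∈ C)).card := by
          refine Finset.sum_congr rfl fun π _ => ?_
          exact (Finset.card_filter _ _).symm
      _ = ∑ π ∈ Γ, ((A.image (π : V → V)) ∩ C).card := by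
          refine Finset.sum_congr rfl fun π _ => ?_
          have himg : (A.image (π : V → V)) ∩ C
              = (A.filter (fun a => π a ∈ C)).image (π : V → V) := by
            ext x
            simp only [Finset.mem_inter, Finset.mem_image, Finset.mem_filter]
            constructor
            · rintro ⟨⟨a, ha, rfl⟩, hx⟩
              exact ⟨a, ⟨ha, hx⟩, rfl⟩
            · rintro ⟨a, ⟨ha, hx⟩, rfl⟩
              exact ⟨⟨a, ha, rfl⟩, hx⟩
          rw [himg, Finset.card_image_of_injective _ π.injective]
      _ ≤ ∑ π ∈ Γ, 1 := Finset.sum_le_sum h1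
      _ = Γ.card := by simp
  rw [hΓcard, ← hAcard, ← hCcard] at *
  exact Nat.le_of_mul_le_mul_right key hs_pos
end

section
/- For integers q ≥ 2, n ≥ 1 and 1 ≤ d ≤ n, we have A_q(n,d) · N_q(n, n−d+1) ≤ q^n. -/
/-- `Aq q n d` is the maximum size of a code over an alphabet of `q` symbols with
length `n` and minimum Hamming distance at least `d`. -/
noncomputable def Aq (q n d : ℕ) : ℕ :=
  sSup {m | ∃ C : Finset (Fin n → Fin q), C.card = m ∧
    ∀ c ∈ C, ∀ c' ∈ C, c ≠ c' → d ≤ hammingDist c c'}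

/-- `Nq q n s` is the maximum size of a set of words of length `n` over an alphabet of
`q` symbols such that any two words of the set agree in at least `s` positions. -/
noncomputable def Nq (q n s : ℕ) : ℕ :=
  sSup {m | ∃ S : Finset (Fin n → Fin q), S.card = m ∧
    ∀ x ∈ S, ∀ y ∈ S, x ≠ y → s ≤ (Finset.univ.filter (fun i => x i = y i)).card}

/-!
Give the alphabet the group structure of `ℤ/qℤ` and map a codeword `c` and a word `x` to
`c + x`. If `c + x = c' + x'` then `c - c' = x' - x`, so `c` and `c'` differ in exactly the
positions where `x` and `x'` differ. Distinct codewords differ in at least `d` positions, while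
distinct words of an `(n - d + 1)`-agreeing family differ in fewer than `d`; hence the map is
injective on pairs and the number of pairs is at most `q ^ n`.
-/

open Finset

theorem Finset.exists_card_eq_sSup_card {α : Type*} [Fintype α] (P : Finset α → Prop)
    (h₀ : P ∅) : ∃ s : Finset α, #s = sSup {m | ∃ s : Finset α, #s = m ∧ P s} ∧ P s :=
  Nat.sSup_mem (s := {m | ∃ s : Finset α, #s = m ∧ P s}) ⟨0, ∅, rfl, h₀⟩
    ⟨Fintype.card α, by rintro _ ⟨s, rfl, -⟩; exact s.card_le_univ⟩

section Words

variable {ι β : Type*} [Fintype ι] [DecidableEq β]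

theorem card_filter_eq_add_hammingDist (x y : ι → β) :
    #{i | x i = y i} + hammingDist x y = Fintype.card ι :=
  card_filter_add_card_filter_not _

theorem hammingDist_eq_of_add_eq [AddCommGroup β] {c c' x x' : ι → β} (h : c + x = c' + x') :
    hammingDist c c' = hammingDist x x' := by
  rw [hammingDist_eq_hammingNorm, hammingDist_comm, hammingDist_eq_hammingNorm,
    neg_add_eq_sub, neg_add_eq_sub, sub_eq_sub_iff_add_eq_add.mpr (h.symm.trans (add_comm _ _))]

theorem card_mul_card_le_of_hammingDist [DecidableEq ι] [AddCommGroup β] [Fintype β] {d : ℕ}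
    {C S : Finset (ι → β)} (hC : ∀ c ∈ C, ∀ c' ∈ C, c ≠ c' → d ≤ hammingDist c c')
    (hS : ∀ x ∈ S, ∀ x' ∈ S, x ≠ x' → hammingDist x x' < d) :
    #C * #S ≤ Fintype.card β ^ Fintype.card ι := by
  rw [← card_product, ← Fintype.card_fun, ← card_univ]
  refine card_le_card_of_injOn (fun p => p.1 + p.2) (fun _ _ => mem_univ _) ?_
  rintro ⟨c, x⟩ hcx ⟨c', x'⟩ hcx' h
  simp only [coe_product, Set.mem_prod, mem_coe] at hcx hcx' h
  have hcc' : c = c' := by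
    by_contra hne
    have hxx' : x ≠ x' := by rintro rfl; exact hne (add_right_cancel h)
    have hdC := hC c hcx.1 c' hcx'.1 hne
    rw [hammingDist_eq_of_add_eq h] at hdC
    exact (hdC.trans_lt (hS x hcx.2 x' hcx'.2 hxx')).false
  subst hcc'
  rw [add_left_cancel h]

end Words

theorem Aq_mul_Nq_le_general (q n d : ℕ) (hq : 2 ≤ q) :
    Aq q n d * Nq q n (n - d + 1) ≤ q ^ n := by
  have : NeZero q := ⟨by omega⟩
  obtain ⟨C, hCcard, hC⟩ := exists_card_eq_sSup_card
    (fun C : Finset (Fin n → Fin q) => ∀ c ∈ C, ∀ c' ∈ C, c ≠ c' → d ≤ hammingDist c c')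
    (by simp)
  obtain ⟨S, hScard, hS⟩ := exists_card_eq_sSup_card
    (fun S : Finset (Fin n → Fin q) => ∀ x ∈ S, ∀ y ∈ S, x ≠ y → n - d + 1 ≤ #{i | x i = y i})
    (by simp)
  rw [Aq, Nq, ← hCcard, ← hScard]
  have hS' : ∀ x ∈ S, ∀ y ∈ S, x ≠ y → hammingDist x y < d := fun x hx y hy hxy => by
    have hagree := hS x hx y hy hxy
    have hsum := card_filter_eq_add_hammingDist x y
    rw [Fintype.card_fin] at hsum
    omega
  simpa using card_mul_card_le_of_hammingDist hC hS'

/-- `A_q(n,d) · N_q(n, n−d+1) ≤ q^n`. -/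
theorem Aq_mul_Nq_le (q n d : ℕ) (hq : 2 ≤ q) (hn : 1 ≤ n) (hd : 1 ≤ d) (hdn : d ≤ n) :
    Aq q n d * Nq q n (n - d + 1) ≤ q ^ n :=
  Aq_mul_Nq_le_general q n d hq
end

section
/- For integers n ≥ 1 and even d with 2 ≤ d ≤ n, A(n,d) · ∑_{i=0}^{(d−2)/2} C(n−1,i) ≤ 2^{n−1}, where C(n−1,i) denotes the binomial coefficient. (This bound is strictly tighter than the Hamming bound for even d.) -/
open Finset

lemma sphere_card (m i : ℕ) (c : Fin m → Bool) :
    (Finset.univ.filter fun x : Fin m → Bool => hammingDist x c = i).card = m.choose i := by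
  have : m.choose i = (Finset.powersetCard i (Finset.univ : Finset (Fin m))).card := by
    rw [Finset.card_powersetCard, Finset.card_univ, Fintype.card_fin]
  rw [this]
  apply Finset.card_bij (fun x _ => Finset.univ.filter fun j => x j ≠ c j)
  · intro x hx
    simp only [Finset.mem_filter, Finset.mem_univ, true_and] at hx
    rw [Finset.mem_powersetCard]
    exact ⟨Finset.subset_univ _, hx⟩
  · intro x hx y hy h
    funext j
    have := Finset.ext_iff.mp h j
    simp only [Finset.mem_filter, Finset.mem_univ, true_and] at this
    by_cases hc : x j = c j
    · by_cases hc' : y j = c j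
      · rw [hc, hc']
      · exact absurd hc (by tauto)
    · have : y j ≠ c j := by tauto
      revert hc this
      cases x j <;> cases y j <;> cases c j <;> simp
  · intro s hs
    rw [Finset.mem_powersetCard] at hs
    refine ⟨fun j => if j ∈ s then !(c j) else c j, ?_, ?_⟩
    · simp only [Finset.mem_filter, Finset.mem_univ, true_and]
      rw [← hs.2, hammingDist]
      congr 1
      ext j
      by_cases hj : j ∈ s <;> simp [hj, Bool.not_ne_self]
    · ext j
      by_cases hj : j ∈ s <;> simp [hj, Bool.not_ne_self]

lemma ball_card (m r : ℕ) (c : Fin m → Bool) :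
    (Finset.univ.filter fun x : Fin m → Bool => hammingDist x c ≤ r).card
      = ∑ i ∈ Finset.range (r + 1), m.choose i := by
  have : (Finset.univ.filter fun x : Fin m → Bool => hammingDist x c ≤ r)
      = (Finset.range (r + 1)).biUnion
        (fun i => Finset.univ.filter fun x : Fin m → Bool => hammingDist x c = i) := by
    ext x
    simp only [Finset.mem_filter, Finset.mem_univ, true_and, Finset.mem_biUnion,
      Finset.mem_range]
    constructor
    · intro h; exact ⟨hammingDist x c, by omega, rfl⟩
    · rintro ⟨i, hi, h⟩; omega
  rw [this, Finset.card_biUnion]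
  · exact Finset.sum_congr rfl fun i _ => sphere_card m i c
  · intro i _ j _ hij
    apply Finset.disjoint_left.mpr
    intro x hx hx'
    simp only [Finset.mem_filter] at hx hx'
    exact hij (hx.2 ▸ hx'.2.symm ▸ rfl)

lemma code_bound (m e : ℕ) (he : 1 ≤ e) (C : Finset (Fin m → Bool))
    (hC : ∀ c ∈ C, ∀ c' ∈ C, c ≠ c' → e ≤ hammingDist c c') :
    C.card * ∑ i ∈ Finset.range ((e - 1) / 2 + 1), m.choose i ≤ 2 ^ m := by
  set r := (e - 1) / 2 with hr
  have h2r : 2 * r + 1 ≤ e := by omega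
  set ball := fun c : Fin m → Bool => Finset.univ.filter fun x => hammingDist x c ≤ r with hb
  have hdisj : ∀ c ∈ C, ∀ c' ∈ C, c ≠ c' → Disjoint (ball c) (ball c') := by
    intro c hc c' hc' hne
    apply Finset.disjoint_left.mpr
    intro x hx hx'
    simp only [hb, Finset.mem_filter, Finset.mem_univ, true_and] at hx hx'
    have hd := hC c hc c' hc' hne
    have ht : hammingDist c c' ≤ hammingDist c x + hammingDist x c' := hammingDist_triangle c x c'
    rw [hammingDist_comm c x] at ht
    omega
  calc C.card * ∑ i ∈ Finset.range (r + 1), m.choose i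
      = ∑ c ∈ C, (ball c).card := by
        rw [Finset.sum_congr rfl fun c (_ : c ∈ C) => ball_card m r c]
        simp [Finset.sum_const, mul_comm]
    _ = (C.biUnion ball).card := (Finset.card_biUnion hdisj).symm
    _ ≤ (Finset.univ : Finset (Fin m → Bool)).card := Finset.card_le_card (Finset.subset_univ _)
    _ = 2 ^ m := by rw [Finset.card_univ]; simp [Fintype.card_fun]

def codeSet (n d : ℕ) : Set ℕ :=
  {m | ∃ C : Finset (Fin n → Bool), C.card = m ∧
    ∀ c ∈ C, ∀ c' ∈ C, c ≠ c' → d ≤ hammingDist c c'}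

lemma codeSet_nonempty (n d : ℕ) : (codeSet n d).Nonempty :=
  ⟨0, ∅, Finset.card_empty, by simp⟩

lemma codeSet_bddAbove (n d : ℕ) : BddAbove (codeSet n d) := by
  refine ⟨2 ^ n, ?_⟩
  rintro m ⟨C, hc, -⟩
  calc m = C.card := hc.symm
    _ ≤ (Finset.univ : Finset (Fin n → Bool)).card := Finset.card_le_card (Finset.subset_univ _)
    _ = 2 ^ n := by rw [Finset.card_univ]; simp [Fintype.card_fun]

/-- `A n d` is the maximum size of a binary code of length `n` and minimum Hamming
distance at least `d`. -/
noncomputable def A (n d : ℕ) : ℕ :=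
  sSup {m | ∃ C : Finset (Fin n → Bool), C.card = m ∧
    ∀ c ∈ C, ∀ c' ∈ C, c ≠ c' → d ≤ hammingDist c c'}

lemma A_eq (n d : ℕ) : A n d = sSup (codeSet n d) := rfl

lemma A_mem (n d : ℕ) : A n d ∈ codeSet n d :=
  Nat.sSup_mem (codeSet_nonempty n d) (codeSet_bddAbove n d)

lemma A_bound (m e : ℕ) (he : 1 ≤ e) :
    A m e * ∑ i ∈ Finset.range ((e - 1) / 2 + 1), m.choose i ≤ 2 ^ m := by
  obtain ⟨C, hc, hdist⟩ := A_mem m e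
  rw [← hc]
  exact code_bound m e he C hdist

lemma puncture (n d : ℕ) (hn : 1 ≤ n) (hd : 2 ≤ d) : A n d ≤ A (n - 1) (d - 1) := by
  obtain ⟨C, hc, hdist⟩ := A_mem n d
  set p : (Fin n → Bool) → (Fin (n - 1) → Bool) :=
    fun c i => c (Fin.castLE (Nat.sub_le n 1) i) with hp
  have key : ∀ c c' : Fin n → Bool, hammingDist c c' ≤ hammingDist (p c) (p c') + 1 := by
    intro c c'
    have hsub : (Finset.univ.filter fun j : Fin n => c j ≠ c' j) ⊆
        ((Finset.univ.filter fun i : Fin (n - 1) => p c i ≠ p c' i).image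
          (Fin.castLE (Nat.sub_le n 1))) ∪ {(⟨n - 1, by omega⟩ : Fin n)} := by
      intro j hj
      simp only [Finset.mem_filter, Finset.mem_univ, true_and] at hj
      rw [Finset.mem_union, Finset.mem_image]
      by_cases hjv : (j : ℕ) < n - 1
      · left
        refine ⟨⟨(j : ℕ), hjv⟩, ?_, ?_⟩
        · simp only [Finset.mem_filter, Finset.mem_univ, true_and, hp]
          convert hj using 2 <;> exact Fin.ext rfl
        · exact Fin.ext rfl
      · right
        simp only [Finset.mem_singleton]
        exact Fin.ext (by have := j.isLt; simp only [Fin.val_mk]; omega)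
    calc hammingDist c c' = (Finset.univ.filter fun j : Fin n => c j ≠ c' j).card := rfl
      _ ≤ _ := Finset.card_le_card hsub
      _ ≤ ((Finset.univ.filter fun i : Fin (n - 1) => p c i ≠ p c' i).image
          (Fin.castLE (Nat.sub_le n 1))).card + 1 := by
          refine le_trans (Finset.card_union_le _ _) ?_
          simp
      _ ≤ hammingDist (p c) (p c') + 1 := by
          exact Nat.add_le_add_right (Finset.card_image_le) 1
  have hinj : Set.InjOn p C := by
    intro c hc1 c' hc2 hpe
    by_contra hne
    have h1 := hdist c hc1 c' hc2 hne
    have h2 := key c c'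
    rw [hpe] at h2
    simp [hammingDist_self] at h2
    omega
  have hmem : C.card ∈ codeSet (n - 1) (d - 1) := by
    refine ⟨C.image p, ?_, ?_⟩
    · exact Finset.card_image_of_injOn hinj
    · intro b hb b' hb' hne
      rw [Finset.mem_image] at hb hb'
      obtain ⟨c, hc1, rfl⟩ := hb
      obtain ⟨c', hc2, rfl⟩ := hb'
      have hcc : c ≠ c' := fun h => hne (h ▸ rfl)
      have h1 := hdist c hc1 c' hc2 hcc
      have h2 := key c c'
      omega
  rw [← hc]
  exact le_csSup (codeSet_bddAbove _ _) hmem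

/-- For even `d`, `A(n,d) · ∑_{i=0}^{(d−2)/2} C(n−1,i) ≤ 2^(n−1)`. -/
theorem improved_binary_hamming_bound (n d : ℕ) (hn : 1 ≤ n) (hd : 2 ≤ d) (hdn : d ≤ n)
    (hdeven : Even d) :
    A n d * ∑ i ∈ Finset.range ((d - 2) / 2 + 1), (n - 1).choose i ≤ 2 ^ (n - 1) := by
  have h1 : A n d ≤ A (n - 1) (d - 1) := puncture n d hn hd
  have h2 : A (n - 1) (d - 1) * ∑ i ∈ Finset.range ((d - 1 - 1) / 2 + 1), (n - 1).choose i
      ≤ 2 ^ (n - 1) := A_bound (n - 1) (d - 1) (by omega)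
  have he : d - 1 - 1 = d - 2 := by omega
  rw [he] at h2
  exact le_trans (Nat.mul_le_mul_right _ h1) h2
end

section
/- For integers q ≥ 3, n ≥ 1 and 1 ≤ d ≤ n, set t = n−d+1 and r = min( ⌊(n−t)/2⌋ , ⌊(t−1)/(q−2)⌋ ). Then A_q(n,d) · ∑_{i=0}^{r} C(t+2r, i)·(q−1)^i ≤ q^{t+2r}, where C(t+2r,i) denotes the binomial coefficient. -/
/-!
Puncturing a code of minimum distance `d` in `k ≤ d - 1` coordinates keeps its codewords
distinct and lowers the minimum distance by at most `k`. Since `2r ≤ d - 1`, deleting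
`d - 1 - 2r` coordinates turns a code of length `n` and distance `d` into one of the same size,
of length `t + 2r` and distance `2r + 1`, whose radius-`r` Hamming balls are pairwise disjoint;
counting the points of these balls is the sphere-packing bound in length `t + 2r`.
-/

open Finset

section HammingBall

variable {ι α : Type*} [Fintype ι] [DecidableEq ι] [Fintype α] [DecidableEq α]

theorem card_filter_filter_ne_eq (c : ι → α) (S : Finset ι) :
    #{x : ι → α | ({j | x j ≠ c j} : Finset ι) = S} = (Fintype.card α - 1) ^ #S := by
  have hpi : ({x : ι → α | ({j | x j ≠ c j} : Finset ι) = S} : Finset _) =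
      Fintype.piFinset fun j => if j ∈ S then univ.erase (c j) else {c j} := by
    ext x
    simp only [mem_filter, mem_univ, true_and, Fintype.mem_piFinset, Finset.ext_iff]
    refine forall_congr' fun j => ?_
    split_ifs with hj <;> simp [hj]
  rw [hpi, Fintype.card_piFinset]
  simp only [apply_ite card, card_erase_of_mem (mem_univ _), card_univ, card_singleton]
  rw [prod_ite_mem, univ_inter, prod_const]

theorem card_filter_hammingDist_eq (c : ι → α) (i : ℕ) :
    #{x : ι → α | hammingDist x c = i} = (Fintype.card ι).choose i * (Fintype.card α - 1) ^ i := by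
  set diff : (ι → α) → Finset ι := fun x => {j | x j ≠ c j}
  have hmaps : Set.MapsTo diff ({x | hammingDist x c = i} : Finset (ι → α))
      (powersetCard i univ : Finset (Finset ι)) := by
    intro x hx
    simpa [diff, hammingDist] using hx
  rw [card_eq_sum_card_fiberwise hmaps, ← card_univ, ← card_powersetCard, card_eq_sum_ones,
    sum_mul, one_mul]
  refine sum_congr rfl fun S hS => ?_
  rw [← (mem_powersetCard.mp hS).2, ← card_filter_filter_ne_eq c S, filter_filter]
  refine congrArg card (filter_congr fun x _ => and_iff_right_of_imp fun hx => ?_)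
  exact congrArg card hx

theorem card_filter_hammingDist_le (c : ι → α) (r : ℕ) :
    #{x : ι → α | hammingDist x c ≤ r} =
      ∑ i ∈ range (r + 1), (Fintype.card ι).choose i * (Fintype.card α - 1) ^ i := by
  have hmaps : Set.MapsTo (hammingDist · c) ({x | hammingDist x c ≤ r} : Finset (ι → α))
      (range (r + 1) : Finset ℕ) := by
    intro x hx
    simpa [Nat.lt_succ_iff] using hx
  rw [card_eq_sum_card_fiberwise hmaps]
  refine sum_congr rfl fun i hi => ?_
  rw [filter_filter, ← card_filter_hammingDist_eq c i]
  refine congrArg card (filter_congr fun x _ => and_iff_right_of_imp fun hx => ?_)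
  rw [hx]
  exact Nat.lt_succ_iff.mp (mem_range.mp hi)

theorem hamming_bound (C : Finset (ι → α)) (r : ℕ)
    (hC : ∀ c ∈ C, ∀ c' ∈ C, c ≠ c' → 2 * r + 1 ≤ hammingDist c c') :
    #C * ∑ i ∈ range (r + 1), (Fintype.card ι).choose i * (Fintype.card α - 1) ^ i ≤
      Fintype.card α ^ Fintype.card ι := by
  have hdisj : (C : Set (ι → α)).PairwiseDisjoint
      fun c => ({x | hammingDist x c ≤ r} : Finset (ι → α)) := by
    intro c hc c' hc' hne
    refine disjoint_left.mpr fun x hx hx' => ?_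
    have := hC c hc c' hc' hne
    have := hammingDist_triangle_left c c' x
    simp only [mem_filter] at hx hx'
    omega
  calc #C * ∑ i ∈ range (r + 1), (Fintype.card ι).choose i * (Fintype.card α - 1) ^ i
      = ∑ c ∈ C, #{x : ι → α | hammingDist x c ≤ r} := by
        simp only [card_filter_hammingDist_le, sum_const, smul_eq_mul]
    _ = #(C.biUnion fun c => {x | hammingDist x c ≤ r}) := (card_biUnion hdisj).symm
    _ ≤ Fintype.card (ι → α) := card_le_univ _
    _ = Fintype.card α ^ Fintype.card ι := Fintype.card_fun

end HammingBall

theorem hammingDist_le_hammingDist_comp_castAdd_add {α : Type*} [DecidableEq α] {m k : ℕ}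
    (x y : Fin (m + k) → α) :
    hammingDist x y ≤ hammingDist (x ∘ Fin.castAdd k) (y ∘ Fin.castAdd k) + k := by
  simp only [hammingDist, card_filter, Fin.sum_univ_add, Function.comp_apply]
  gcongr
  calc ∑ i : Fin k, (if x (Fin.natAdd m i) ≠ y (Fin.natAdd m i) then 1 else 0)
      ≤ ∑ _i : Fin k, 1 := sum_le_sum fun i _ => by split_ifs <;> simp
    _ = k := by simp

theorem bddAbove_Aq_set (q n d : ℕ) : BddAbove {m | ∃ C : Finset (Fin n → Fin q), C.card = m ∧
    ∀ c ∈ C, ∀ c' ∈ C, c ≠ c' → d ≤ hammingDist c c'} :=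
  ⟨Fintype.card (Fin n → Fin q), fun _ ⟨C, hCm, _⟩ => hCm ▸ card_le_univ C⟩

theorem card_le_Aq {q n d : ℕ} (C : Finset (Fin n → Fin q))
    (hC : ∀ c ∈ C, ∀ c' ∈ C, c ≠ c' → d ≤ hammingDist c c') : #C ≤ Aq q n d :=
  le_csSup (bddAbove_Aq_set q n d) ⟨C, rfl, hC⟩

theorem exists_card_eq_Aq (q n d : ℕ) : ∃ C : Finset (Fin n → Fin q), #C = Aq q n d ∧
    ∀ c ∈ C, ∀ c' ∈ C, c ≠ c' → d ≤ hammingDist c c' := by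
  refine Nat.sSup_mem ?_ (bddAbove_Aq_set q n d)
  exact ⟨0, ∅, by simp⟩

theorem Aq_hamming_bound (q m r : ℕ) :
    Aq q m (2 * r + 1) * ∑ i ∈ range (r + 1), m.choose i * (q - 1) ^ i ≤ q ^ m := by
  obtain ⟨C, hCcard, hC⟩ := exists_card_eq_Aq q m (2 * r + 1)
  simpa [hCcard] using hamming_bound C r hC

theorem Aq_add_add_le (q m k : ℕ) {d : ℕ} (hd : 1 ≤ d) : Aq q (m + k) (d + k) ≤ Aq q m d := by
  obtain ⟨C, hCcard, hC⟩ := exists_card_eq_Aq q (m + k) (d + k)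
  have hdist : ∀ c ∈ C, ∀ c' ∈ C, c ≠ c' →
      d ≤ hammingDist (c ∘ Fin.castAdd k) (c' ∘ Fin.castAdd k) :=
    fun c hc c' hc' hne => by
      have := hC c hc c' hc' hne
      have := hammingDist_le_hammingDist_comp_castAdd_add c c'
      omega
  have hinj : Set.InjOn (· ∘ Fin.castAdd k) (C : Set (Fin (m + k) → Fin q)) := by
    intro c hc c' hc' (heq : c ∘ Fin.castAdd k = c' ∘ Fin.castAdd k)
    by_contra hne
    have := hdist c hc c' hc' hne
    rw [heq, hammingDist_self] at this
    omega
  rw [← hCcard, ← card_image_of_injOn hinj]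
  refine card_le_Aq _ ?_
  simp only [mem_image]
  rintro _ ⟨c, hc, rfl⟩ _ ⟨c', hc', rfl⟩ hne
  exact hdist c hc c' hc' (ne_of_apply_ne (· ∘ Fin.castAdd k) hne)

theorem Aq_mul_sum_choose_le {q n d : ℕ} (r : ℕ) (hr : 2 * r + 1 ≤ d) (hdn : d ≤ n) :
    Aq q n d * ∑ i ∈ range (r + 1), (n - d + 1 + 2 * r).choose i * (q - 1) ^ i ≤
      q ^ (n - d + 1 + 2 * r) := by
  have hpunct : Aq q n d ≤ Aq q (n - d + 1 + 2 * r) (2 * r + 1) := by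
    have := Aq_add_add_le q (n - d + 1 + 2 * r) (d - (2 * r + 1)) (Nat.succ_pos (2 * r))
    rwa [show n - d + 1 + 2 * r + (d - (2 * r + 1)) = n by omega,
      show 2 * r + 1 + (d - (2 * r + 1)) = d by omega] at this
  exact (Nat.mul_le_mul_right _ hpunct).trans (Aq_hamming_bound q _ r)

theorem qary_diametric_bound_general (q n d : ℕ) (hd : 1 ≤ d)
    (hdn : d ≤ n) :
    Aq q n d *
      ∑ i ∈ Finset.range (min ((n - (n - d + 1)) / 2) ((n - d + 1 - 1) / (q - 2)) + 1),
        ((n - d + 1) + 2 * min ((n - (n - d + 1)) / 2) ((n - d + 1 - 1) / (q - 2))).choose i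
          * (q - 1) ^ i ≤
      q ^ ((n - d + 1) + 2 * min ((n - (n - d + 1)) / 2) ((n - d + 1 - 1) / (q - 2))) := by
  refine Aq_mul_sum_choose_le _ ?_ hdn
  have := min_le_left ((n - (n - d + 1)) / 2) ((n - d + 1 - 1) / (q - 2))
  omega

/-- For `q ≥ 3`, with `t = n−d+1` and `r = min(⌊(n−t)/2⌋, ⌊(t−1)/(q−2)⌋)`,
`A_q(n,d) · ∑_{i=0}^{r} C(t+2r,i)·(q−1)^i ≤ q^(t+2r)`. -/
theorem qary_diametric_bound (q n d : ℕ) (hq : 3 ≤ q) (hn : 1 ≤ n) (hd : 1 ≤ d)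
    (hdn : d ≤ n) :
    Aq q n d *
      ∑ i ∈ Finset.range (min ((n - (n - d + 1)) / 2) ((n - d + 1 - 1) / (q - 2)) + 1),
        ((n - d + 1) + 2 * min ((n - (n - d + 1)) / 2) ((n - d + 1 - 1) / (q - 2))).choose i
          * (q - 1) ^ i ≤
      q ^ ((n - d + 1) + 2 * min ((n - (n - d + 1)) / 2) ((n - d + 1 - 1) / (q - 2))) :=
  qary_diametric_bound_general q n d hd hdn
end

section
/- Let X and Y be finite simple graphs, suppose Y is vertex transitive, and suppose there exists a graph homomorphism from X to Y (a map f on vertices such that x adjacent to y in X implies f(x) adjacent to f(y) in Y). Then |V(X)| · α(Y) ≤ |V(Y)| · α(X), where α denotes the independence number. -/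
lemma indepNum_bddAbove {V : Type*} [Fintype V] (G : SimpleGraph V) :
    BddAbove {k | ∃ s : Finset V, s.card = k ∧ ∀ u ∈ s, ∀ v ∈ s, ¬ G.Adj u v} :=
  ⟨Fintype.card V, by rintro k ⟨s, rfl, -⟩; exact s.card_le_univ⟩

lemma indepNum_spec {V : Type*} [Fintype V] (G : SimpleGraph V) :
    ∃ s : Finset V, s.card = indepNum G ∧ ∀ u ∈ s, ∀ v ∈ s, ¬ G.Adj u v := by
  have h0 : (0:ℕ) ∈ {k | ∃ s : Finset V, s.card = k ∧ ∀ u ∈ s, ∀ v ∈ s, ¬ G.Adj u v} :=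
    ⟨∅, by simp⟩
  exact Nat.sSup_mem ⟨0, h0⟩ (indepNum_bddAbove G)

lemma le_indepNum {V : Type*} [Fintype V] (G : SimpleGraph V) (s : Finset V)
    (hs : ∀ u ∈ s, ∀ v ∈ s, ¬ G.Adj u v) : s.card ≤ indepNum G :=
  le_csSup (indepNum_bddAbove G) ⟨s, rfl, hs⟩

/-- If `Y` is vertex transitive and there is a graph homomorphism from `X` to `Y`,
then `|V(X)| · α(Y)| ≤ |V(Y)| · α(X)`. -/
theorem card_mul_indepNum_le {α β : Type*} [Fintype α] [Fintype β]
    (X : SimpleGraph α) (Y : SimpleGraph β)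
    (hvt : ∀ u v : β, ∃ φ : Y ≃g Y, φ u = v)
    (f : α → β) (hf : ∀ x y : α, X.Adj x y → Y.Adj (f x) (f y)) :
    Fintype.card α * indepNum Y ≤ Fintype.card β * indepNum X := by
  classical
  rcases isEmpty_or_nonempty β with hβ | hβ
  · haveI : IsEmpty α := Function.isEmpty f
    simp
  obtain ⟨S, hScard, hSind⟩ := indepNum_spec Y
  haveI : Fintype (Y ≃g Y) :=
    Fintype.ofInjective (fun φ => (φ : β → β)) (fun a b h => DFunLike.coe_injective h)
  set N : β → ℕ := fun v => (Finset.univ.filter (fun g : Y ≃g Y => g.symm v ∈ S)).card with hN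
  have hNconst : ∀ u v : β, N u = N v := by
    intro u v
    obtain ⟨ψ, hψ⟩ := hvt u v
    apply Finset.card_bij' (fun g _ => g.trans ψ) (fun h _ => h.trans ψ.symm)
    · intro g _; exact RelIso.ext (fun x => by simp)
    · intro g _; exact RelIso.ext (fun x => by simp)
    · intro g hg
      simp only [Finset.mem_filter, Finset.mem_univ, true_and] at hg ⊢
      show g.symm (ψ.symm v) ∈ S
      rw [← hψ, RelIso.symm_apply_apply]; exact hg
    · intro h hh
      simp only [Finset.mem_filter, Finset.mem_univ, true_and] at hh ⊢
      show h.symm (ψ u) ∈ S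
      rw [hψ]; exact hh
  obtain ⟨v₀⟩ := hβ
  have key1 : Fintype.card β * N v₀ = Fintype.card (Y ≃g Y) * S.card := by
    have hswap : ∑ v : β, N v
        = ∑ g : Y ≃g Y, (Finset.univ.filter (fun v : β => g.symm v ∈ S)).card := by
      simp only [hN, Finset.card_filter]
      rw [Finset.sum_comm]
    have h2 : ∀ g : Y ≃g Y,
        (Finset.univ.filter (fun v : β => g.symm v ∈ S)).card = S.card := by
      intro g
      have himg : Finset.univ.filter (fun v : β => g.symm v ∈ S) = S.image g := by
        ext x
        simp only [Finset.mem_filter, Finset.mem_univ, true_and, Finset.mem_image]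
        constructor
        · intro h; exact ⟨g.symm x, h, by simp⟩
        · rintro ⟨a, ha, rfl⟩; simpa using ha
      rw [himg, Finset.card_image_of_injective _ g.injective]
    calc Fintype.card β * N v₀ = ∑ _v : β, N v₀ := by
          simp [Finset.sum_const, mul_comm]
      _ = ∑ v : β, N v := Finset.sum_congr rfl (fun v _ => hNconst v₀ v)
      _ = ∑ g : Y ≃g Y, (Finset.univ.filter (fun v : β => g.symm v ∈ S)).card := hswap
      _ = Fintype.card (Y ≃g Y) * S.card := by
          rw [Finset.sum_congr rfl (fun g _ => h2 g)]
          simp [Finset.sum_const, mul_comm]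
  have key2 : Fintype.card α * N v₀ ≤ Fintype.card (Y ≃g Y) * indepNum X := by
    have h1 : ∑ x : α, N (f x)
        = ∑ g : Y ≃g Y, (Finset.univ.filter (fun x : α => g.symm (f x) ∈ S)).card := by
      simp only [hN, Finset.card_filter]
      rw [Finset.sum_comm]
    have h2 : ∀ g : Y ≃g Y,
        (Finset.univ.filter (fun x : α => g.symm (f x) ∈ S)).card ≤ indepNum X := by
      intro g
      apply le_indepNum
      intro u hu v hv hadj
      simp only [Finset.mem_filter, Finset.mem_univ, true_and] at hu hv
      have : Y.Adj (g.symm (f u)) (g.symm (f v)) := (g.symm.map_adj_iff).mpr (hf u v hadj)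
      exact hSind _ hu _ hv this
    calc Fintype.card α * N v₀ = ∑ _x : α, N v₀ := by
          simp [Finset.sum_const, mul_comm]
      _ = ∑ x : α, N (f x) := Finset.sum_congr rfl (fun x _ => hNconst v₀ (f x))
      _ = _ := h1
      _ ≤ ∑ _g : Y ≃g Y, indepNum X := Finset.sum_le_sum (fun g _ => h2 g)
      _ = Fintype.card (Y ≃g Y) * indepNum X := by simp [Finset.sum_const, mul_comm]
  have hGpos : 0 < Fintype.card (Y ≃g Y) := Fintype.card_pos_iff.mpr ⟨RelIso.refl _⟩
  apply Nat.le_of_mul_le_mul_left _ hGpos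
  calc Fintype.card (Y ≃g Y) * (Fintype.card α * indepNum Y)
      = Fintype.card α * (Fintype.card (Y ≃g Y) * S.card) := by rw [hScard]; ring
    _ = Fintype.card α * (Fintype.card β * N v₀) := by rw [key1]
    _ = Fintype.card β * (Fintype.card α * N v₀) := by ring
    _ ≤ Fintype.card β * (Fintype.card (Y ≃g Y) * indepNum X) := Nat.mul_le_mul_left _ key2
    _ = Fintype.card (Y ≃g Y) * (Fintype.card β * indepNum X) := by ring
end

section
/- (Bassalygo–Elias inequality) For integers n ≥ 1, 1 ≤ d ≤ n and 0 ≤ w ≤ n, A(n,d) · C(n,w) ≤ 2^n · A(n,d,w), where C(n,w) denotes the binomial coefficient. -/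
/-- The weight of a binary word: the number of its nonzero entries. -/
def wt {n : ℕ} (x : Fin n → Bool) : ℕ :=
  (Finset.univ.filter (fun i => x i = true)).card

/-- `Acw n d w` is the maximum size of a binary code of length `n`, constant weight `w`,
and minimum Hamming distance at least `d`. -/
noncomputable def Acw (n d w : ℕ) : ℕ :=
  sSup {m | ∃ C : Finset (Fin n → Bool), C.card = m ∧ (∀ c ∈ C, wt c = w) ∧
    ∀ c ∈ C, ∀ c' ∈ C, c ≠ c' → d ≤ hammingDist c c'}

/-!
Translating a code by a word `x` (coordinatewise xor, i.e. `· ∆ x`) preserves distances and turns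
distance to `x` into weight. Hence, for a code `C` of minimum distance `d` and any `x`, the
codewords at distance `w` from `x` translate to a constant-weight code, so there are at most
`A(n,d,w)` of them. Each codeword is at distance `w` from exactly `C(n,w)` words, and counting the
pairs `(c, x)` with `d(c, x) = w` in both ways gives `|C| · C(n,w) ≤ 2^n · A(n,d,w)`.
-/

open Finset
open scoped symmDiff

def IsCode {n : ℕ} (d : ℕ) (C : Finset (Fin n → Bool)) : Prop :=
  ∀ c ∈ C, ∀ c' ∈ C, c ≠ c' → d ≤ hammingDist c c'

section Words

variable {n : ℕ}

theorem hammingDist_symmDiff_right (x a b : Fin n → Bool) :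
    hammingDist (a ∆ x) (b ∆ x) = hammingDist a b :=
  hammingDist_comp (fun i => (· ∆ x i)) fun i => symmDiff_left_injective (x i)

theorem wt_symmDiff (a b : Fin n → Bool) : wt (a ∆ b) = hammingDist a b := by
  simp [wt, hammingDist, Bool.symmDiff_eq_xor]

theorem card_filter_wt_eq (w : ℕ) : #{y : Fin n → Bool | wt y = w} = n.choose w := by
  have hsets : #((univ : Finset (Fin n)).powersetCard w) = n.choose w := by simp
  rw [← hsets]
  refine card_bij' (fun y _ => ({i | y i} : Finset (Fin n))) (fun s _ i => decide (i ∈ s))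
    ?_ ?_ ?_ ?_ <;> intros <;>
    simp only [mem_filter, mem_univ, true_and, mem_powersetCard, subset_univ] at * <;>
    simp_all [wt]

theorem card_filter_hammingDist_eq_s10 (c : Fin n → Bool) (w : ℕ) :
    #{x : Fin n → Bool | hammingDist c x = w} = n.choose w := by
  rw [← card_filter_wt_eq w]
  exact card_equiv (symmDiff_right_involutive c).toPerm fun x => by simp [wt_symmDiff]

theorem card_le_two_pow (C : Finset (Fin n → Bool)) : #C ≤ 2 ^ n := by
  simpa using card_le_univ C

theorem IsCode.image_symmDiff_right {d : ℕ} {C : Finset (Fin n → Bool)} (hC : IsCode d C)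
    (x : Fin n → Bool) : IsCode d (C.image (· ∆ x)) := by
  simp only [IsCode, mem_image]
  rintro _ ⟨a, ha, rfl⟩ _ ⟨b, hb, rfl⟩ hab
  rw [hammingDist_symmDiff_right]
  exact hC a ha b hb (ne_of_apply_ne (· ∆ x) hab)

end Words

theorem exists_isCode_card_eq_A (n d : ℕ) :
    ∃ C : Finset (Fin n → Bool), IsCode d C ∧ #C = A n d := by
  obtain ⟨C, hcard, hC⟩ :
      A n d ∈ {m | ∃ C : Finset (Fin n → Bool), #C = m ∧ IsCode d C} :=
    Nat.sSup_mem ⟨0, ∅, rfl, by simp [IsCode]⟩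
      ⟨2 ^ n, by rintro m ⟨C, rfl, -⟩; exact card_le_two_pow C⟩
  exact ⟨C, hC, hcard⟩

theorem IsCode.card_le_Acw {n d w : ℕ} {C : Finset (Fin n → Bool)} (hC : IsCode d C)
    (hw : ∀ c ∈ C, wt c = w) : #C ≤ Acw n d w :=
  le_csSup ⟨2 ^ n, by rintro m ⟨C, rfl, -⟩; exact card_le_two_pow C⟩ ⟨C, rfl, hw, hC⟩

theorem IsCode.card_filter_hammingDist_eq_le_Acw {n d : ℕ} {C : Finset (Fin n → Bool)}
    (hC : IsCode d C) (x : Fin n → Bool) (w : ℕ) :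
    #{c ∈ C | hammingDist c x = w} ≤ Acw n d w := by
  set S := {c ∈ C | hammingDist c x = w}
  have hS : IsCode d S := fun a ha b hb => hC a (mem_filter.1 ha).1 b (mem_filter.1 hb).1
  rw [← card_image_of_injective S (symmDiff_left_injective x)]
  refine (hS.image_symmDiff_right x).card_le_Acw ?_
  simp only [mem_image]
  rintro _ ⟨c, hc, rfl⟩
  rw [wt_symmDiff]
  exact (mem_filter.1 hc).2

theorem bassalygo_elias_general (n d w : ℕ) :
    A n d * n.choose w ≤ 2 ^ n * Acw n d w := by
  obtain ⟨C, hC, hcard⟩ := exists_isCode_card_eq_A n d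
  calc A n d * n.choose w = #C * n.choose w := by rw [hcard]
    _ ≤ #(univ : Finset (Fin n → Bool)) * Acw n d w :=
        card_mul_le_card_mul (fun c x => hammingDist c x = w)
          (fun c _ => (card_filter_hammingDist_eq_s10 c w).ge)
          (fun x _ => hC.card_filter_hammingDist_eq_le_Acw x w)
    _ = 2 ^ n * Acw n d w := by simp

/-- Bassalygo–Elias inequality: `A(n,d) · C(n,w) ≤ 2^n · A(n,d,w)`. -/
theorem bassalygo_elias (n d w : ℕ) (hn : 1 ≤ n) (hd : 1 ≤ d) (hdn : d ≤ n) (hw : w ≤ n) :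
    A n d * n.choose w ≤ 2 ^ n * Acw n d w :=
  bassalygo_elias_general n d w
end

section
/- (Johnson's inequalities) For integers n ≥ 2, 1 ≤ w ≤ n−1 and d ≥ 1, both w · A(n,d,w) ≤ n · A(n−1,d,w−1) and (n−w) · A(n,d,w) ≤ n · A(n−1,d,w) hold. -/
namespace JohnsonAux

def S (n d w : ℕ) : Set ℕ :=
  {m | ∃ C : Finset (Fin n → Bool), C.card = m ∧ (∀ c ∈ C, wt c = w) ∧
    ∀ c ∈ C, ∀ c' ∈ C, c ≠ c' → d ≤ hammingDist c c'}

lemma acw_eq (n d w : ℕ) : Acw n d w = sSup (S n d w) := rfl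

lemma bddS (n d w : ℕ) : BddAbove (S n d w) := by
  refine ⟨Fintype.card (Fin n → Bool), ?_⟩
  rintro m ⟨C, rfl, -, -⟩
  exact Finset.card_le_univ C

lemma zero_memS (n d w : ℕ) : 0 ∈ S n d w :=
  ⟨∅, by simp⟩

lemma le_acw {n d w m : ℕ} (h : m ∈ S n d w) : m ≤ Acw n d w := by
  rw [acw_eq]; exact le_csSup (bddS n d w) h

lemma exists_max (n d w : ℕ) : Acw n d w ∈ S n d w := by
  rw [acw_eq]
  exact Nat.sSup_mem ⟨0, zero_memS n d w⟩ (bddS n d w)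

lemma wt_eq_sum {k : ℕ} (x : Fin k → Bool) :
    wt x = ∑ i, if x i = true then 1 else 0 := Finset.card_filter _ _

lemma hd_eq_sum {k : ℕ} (x y : Fin k → Bool) :
    hammingDist x y = ∑ i, if x i ≠ y i then 1 else 0 := Finset.card_filter _ _

/-- Puncture a word at coordinate `i`. -/
def punc {m : ℕ} (i : Fin (m + 1)) (c : Fin (m + 1) → Bool) : Fin m → Bool :=
  fun j => c (i.succAbove j)

lemma punc_inj {m : ℕ} (i : Fin (m + 1)) {c c' : Fin (m + 1) → Bool}
    (h0 : c i = c' i) (h : punc i c = punc i c') : c = c' := by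
  funext k
  rcases eq_or_ne k i with rfl | hk
  · exact h0
  · obtain ⟨j, rfl⟩ := Fin.exists_succAbove_eq hk
    exact congrFun h j

lemma wt_punc {m : ℕ} (i : Fin (m + 1)) (c : Fin (m + 1) → Bool) :
    wt c = (if c i = true then 1 else 0) + wt (punc i c) := by
  rw [wt_eq_sum, wt_eq_sum, Fin.sum_univ_succAbove (fun k => if c k = true then 1 else 0) i]
  rfl

lemma hd_punc {m : ℕ} (i : Fin (m + 1)) (c c' : Fin (m + 1) → Bool) (h0 : c i = c' i) :
    hammingDist c c' = hammingDist (punc i c) (punc i c') := by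
  rw [hd_eq_sum, hd_eq_sum,
    Fin.sum_univ_succAbove (fun k => if c k ≠ c' k then 1 else 0) i]
  simp [h0]
  rfl

end JohnsonAux

open JohnsonAux in
/-- Johnson's inequalities: `w · A(n,d,w) ≤ n · A(n−1,d,w−1)` and
`(n−w) · A(n,d,w) ≤ n · A(n−1,d,w)`. -/
theorem johnson_inequalities (n d w : ℕ) (hn : 2 ≤ n) (hw1 : 1 ≤ w) (hwn : w ≤ n - 1)
    (hd : 1 ≤ d) :
    w * Acw n d w ≤ n * Acw (n - 1) d (w - 1) ∧
    (n - w) * Acw n d w ≤ n * Acw (n - 1) d w := by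
  obtain ⟨m, rfl⟩ : ∃ m, n = m + 1 := ⟨n - 1, by omega⟩
  simp only [Nat.add_sub_cancel] at hwn ⊢
  obtain ⟨C, hcard, hwt, hdist⟩ := exists_max (m + 1) d w
  -- subcode bounds
  have keyT : ∀ i : Fin (m + 1),
      (C.filter (fun c => c i = true)).card ≤ Acw m d (w - 1) := by
    intro i
    apply le_acw
    refine ⟨(C.filter (fun c => c i = true)).image (punc i), ?_, ?_, ?_⟩
    · apply Finset.card_image_of_injOn
      intro c hc c' hc' h
      simp only [Finset.mem_coe, Finset.mem_filter] at hc hc'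
      exact punc_inj i (hc.2.trans hc'.2.symm) h
    · intro x hx
      obtain ⟨c, hc, rfl⟩ := Finset.mem_image.mp hx
      simp only [Finset.mem_filter] at hc
      have := wt_punc i c
      rw [hwt c hc.1, hc.2] at this
      simp at this
      omega
    · intro x hx y hy hxy
      obtain ⟨c, hc, rfl⟩ := Finset.mem_image.mp hx
      obtain ⟨c', hc', rfl⟩ := Finset.mem_image.mp hy
      simp only [Finset.mem_filter] at hc hc'
      have hne : c ≠ c' := fun h => hxy (by rw [h])
      rw [← hd_punc i c c' (hc.2.trans hc'.2.symm)]
      exact hdist c hc.1 c' hc'.1 hne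
  have keyF : ∀ i : Fin (m + 1),
      (C.filter (fun c => c i = false)).card ≤ Acw m d w := by
    intro i
    apply le_acw
    refine ⟨(C.filter (fun c => c i = false)).image (punc i), ?_, ?_, ?_⟩
    · apply Finset.card_image_of_injOn
      intro c hc c' hc' h
      simp only [Finset.mem_coe, Finset.mem_filter] at hc hc'
      exact punc_inj i (hc.2.trans hc'.2.symm) h
    · intro x hx
      obtain ⟨c, hc, rfl⟩ := Finset.mem_image.mp hx
      simp only [Finset.mem_filter] at hc
      have := wt_punc i c
      rw [hwt c hc.1, hc.2] at this
      simp at this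
      omega
    · intro x hx y hy hxy
      obtain ⟨c, hc, rfl⟩ := Finset.mem_image.mp hx
      obtain ⟨c', hc', rfl⟩ := Finset.mem_image.mp hy
      simp only [Finset.mem_filter] at hc hc'
      have hne : c ≠ c' := fun h => hxy (by rw [h])
      rw [← hd_punc i c c' (hc.2.trans hc'.2.symm)]
      exact hdist c hc.1 c' hc'.1 hne
  -- double counting, true part
  have sumT : ∑ i : Fin (m + 1), (C.filter (fun c => c i = true)).card
      = w * C.card := by
    have : ∀ i : Fin (m + 1), (C.filter (fun c => c i = true)).card
        = ∑ c ∈ C, if c i = true then 1 else 0 := fun i => Finset.card_filter _ _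
    simp only [this]
    rw [Finset.sum_comm]
    have : ∀ c ∈ C, (∑ i : Fin (m + 1), if c i = true then 1 else 0) = w := by
      intro c hc
      rw [← wt_eq_sum, hwt c hc]
    rw [Finset.sum_congr rfl this, Finset.sum_const, smul_eq_mul, mul_comm]
  have sumF : ∑ i : Fin (m + 1), (C.filter (fun c => c i = false)).card
      = (m + 1 - w) * C.card := by
    have h1 : ∀ i : Fin (m + 1), (C.filter (fun c => c i = false)).card
        = ∑ c ∈ C, if c i = false then 1 else 0 := fun i => Finset.card_filter _ _
    simp only [h1]
    rw [Finset.sum_comm]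
    have : ∀ c ∈ C, (∑ i : Fin (m + 1), if c i = false then 1 else 0) = m + 1 - w := by
      intro c hc
      have hsum : (∑ i : Fin (m + 1), if c i = true then 1 else 0)
          + (∑ i : Fin (m + 1), if c i = false then 1 else 0) = m + 1 := by
        rw [← Finset.sum_add_distrib]
        have : ∀ i : Fin (m + 1),
            ((if c i = true then 1 else 0) + (if c i = false then 1 else 0)) = 1 := by
          intro i; cases h : c i <;> simp
        rw [Finset.sum_congr rfl fun i _ => this i]
        simp
      have hw : (∑ i : Fin (m + 1), if c i = true then 1 else 0) = w := by
        rw [← wt_eq_sum, hwt c hc]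
      rw [hw] at hsum
      exact Nat.eq_sub_of_add_eq' hsum
    rw [Finset.sum_congr rfl this, Finset.sum_const, smul_eq_mul, mul_comm]
  constructor
  · calc w * Acw (m + 1) d w = w * C.card := by rw [hcard]
    _ = ∑ i : Fin (m + 1), (C.filter (fun c => c i = true)).card := sumT.symm
    _ ≤ ∑ _i : Fin (m + 1), Acw m d (w - 1) := Finset.sum_le_sum fun i _ => keyT i
    _ = (m + 1) * Acw m d (w - 1) := by simp [mul_comm]
  · calc (m + 1 - w) * Acw (m + 1) d w = (m + 1 - w) * C.card := by rw [hcard]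
    _ = ∑ i : Fin (m + 1), (C.filter (fun c => c i = false)).card := sumF.symm
    _ ≤ ∑ _i : Fin (m + 1), Acw m d w := Finset.sum_le_sum fun i _ => keyF i
    _ = (m + 1) * Acw m d w := by simp [mul_comm]
end

section
/- For integers n ≥ 1 and 1 ≤ δ ≤ w ≤ n, set t = w−δ+1. Then A(n,2δ,w) · C(n−t, w−t) ≤ C(n,w), where C(a,b) denotes the binomial coefficient. -/
/-!
Two codewords of weight `w` at distance at least `2δ` share at most `w - δ` ones, so no
`t`-subset of the coordinates, `t = w - δ + 1`, lies in the supports of two codewords. Counting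
them gives `|C| · C(w,t) ≤ C(n,t)`, and `C(n,w) · C(w,t) = C(n,t) · C(n-t,w-t)` turns this
into the stated bound.
-/

open Finset

section Packing

variable {ι α : Type*} [Fintype α] [DecidableEq α]

theorem card_mul_choose_le_of_card_inter_lt (C : Finset ι) (S : ι → Finset α) {w t : ℕ}
    (hS : ∀ i ∈ C, #(S i) = w) (hinter : ∀ i ∈ C, ∀ j ∈ C, i ≠ j → #(S i ∩ S j) < t) :
    #C * w.choose t ≤ (Fintype.card α).choose t := by
  have hdisj : (C : Set ι).PairwiseDisjoint fun i => (S i).powersetCard t := by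
    intro i hi j hj hij
    refine disjoint_left.mpr fun T hTi hTj => ?_
    rw [mem_powersetCard] at hTi hTj
    have := card_le_card (subset_inter hTi.1 hTj.1)
    have := hinter i hi j hj hij
    omega
  calc #C * w.choose t = ∑ i ∈ C, #((S i).powersetCard t) := by
        rw [sum_congr rfl fun i hi => by rw [card_powersetCard, hS i hi], sum_const, smul_eq_mul]
    _ = #(C.biUnion fun i => (S i).powersetCard t) := (card_biUnion hdisj).symm
    _ ≤ #((univ : Finset α).powersetCard t) :=
        card_le_card fun T hT => by
          obtain ⟨i, -, hT⟩ := mem_biUnion.mp hT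
          exact powersetCard_mono (subset_univ _) hT
    _ = (Fintype.card α).choose t := by rw [card_powersetCard, card_univ]

end Packing

section ConstantWeightCode

variable {n : ℕ}

def supp (x : Fin n → Bool) : Finset (Fin n) :=
  univ.filter fun i => x i = true

theorem wt_eq_card_supp (x : Fin n → Bool) : wt x = #(supp x) := rfl

theorem hammingDist_add_two_mul_card_inter (x y : Fin n → Bool) :
    hammingDist x y + 2 * #(supp x ∩ supp y) = wt x + wt y := by
  simp only [hammingDist, wt, supp, ← filter_and, card_filter, two_mul, ← sum_add_distrib]
  refine sum_congr rfl fun i _ => ?_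
  cases x i <;> cases y i <;> rfl

def IsConstantWeightCode (d w : ℕ) (C : Finset (Fin n → Bool)) : Prop :=
  (∀ c ∈ C, wt c = w) ∧ ∀ c ∈ C, ∀ c' ∈ C, c ≠ c' → d ≤ hammingDist c c'

theorem exists_isConstantWeightCode_card_eq_Acw (n d w : ℕ) :
    ∃ C : Finset (Fin n → Bool), IsConstantWeightCode d w C ∧ #C = Acw n d w := by
  have hne : {m | ∃ C : Finset (Fin n → Bool), #C = m ∧ IsConstantWeightCode d w C}.Nonempty :=
    ⟨0, ∅, rfl, by simp [IsConstantWeightCode]⟩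
  have hbdd : BddAbove {m | ∃ C : Finset (Fin n → Bool), #C = m ∧ IsConstantWeightCode d w C} :=
    ⟨Fintype.card (Fin n → Bool), by rintro m ⟨C, rfl, -⟩; exact card_le_univ C⟩
  obtain ⟨C, hcard, hC⟩ := Nat.sSup_mem hne hbdd
  exact ⟨C, hC, hcard⟩

namespace IsConstantWeightCode

variable {δ w : ℕ} {C : Finset (Fin n → Bool)}

theorem card_inter_supp_lt (hC : IsConstantWeightCode (2 * δ) w C) {c c' : Fin n → Bool}
    (hc : c ∈ C) (hc' : c' ∈ C) (hne : c ≠ c') : #(supp c ∩ supp c') < w - δ + 1 := by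
  have := hammingDist_add_two_mul_card_inter c c'
  have := hC.2 c hc c' hc' hne
  have := hC.1 c hc
  have := hC.1 c' hc'
  omega

theorem card_mul_choose_le (hC : IsConstantWeightCode (2 * δ) w C) :
    #C * w.choose (w - δ + 1) ≤ n.choose (w - δ + 1) := by
  simpa using card_mul_choose_le_of_card_inter_lt C supp hC.1 fun c hc c' hc' hne =>
    hC.card_inter_supp_lt hc hc' hne

end IsConstantWeightCode

end ConstantWeightCode

theorem constant_weight_anticode_bound_general (n δ w : ℕ) (hδ : 1 ≤ δ)
    (hδw : δ ≤ w) :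
    Acw n (2 * δ) w * (n - (w - δ + 1)).choose (w - (w - δ + 1)) ≤ n.choose w := by
  set t := w - δ + 1
  have htw : t ≤ w := by omega
  obtain ⟨C, hC, hcard⟩ := exists_isConstantWeightCode_card_eq_Acw n (2 * δ) w
  refine Nat.le_of_mul_le_mul_right ?_ (Nat.choose_pos htw)
  calc Acw n (2 * δ) w * (n - t).choose (w - t) * w.choose t
      = #C * w.choose t * (n - t).choose (w - t) := by rw [← hcard]; ring
    _ ≤ n.choose t * (n - t).choose (w - t) := Nat.mul_le_mul_right _ hC.card_mul_choose_le
    _ = n.choose w * w.choose t := (Nat.choose_mul htw).symm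

/-- With `t = w−δ+1`, `A(n,2δ,w) · C(n−t,w−t) ≤ C(n,w)`. -/
theorem constant_weight_anticode_bound (n δ w : ℕ) (hn : 1 ≤ n) (hδ : 1 ≤ δ)
    (hδw : δ ≤ w) (hwn : w ≤ n) :
    Acw n (2 * δ) w * (n - (w - δ + 1)).choose (w - (w - δ + 1)) ≤ n.choose w :=
  constant_weight_anticode_bound_general n δ w hδ hδw
end

section
/- For integers q ≥ 2 and n ≥ 1, N_q(n,1) = q^{n−1}; that is, the maximum size of a set of q-ary words of length n that pairwise agree in at least one position equals q^{n−1}. -/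
/-- `N_q(n,1) = q^(n−1)`. -/
theorem Nq_one_eq (q n : ℕ) (hq : 2 ≤ q) (hn : 1 ≤ n) :
    Nq q n 1 = q ^ (n - 1) := by
  haveI : NeZero q := ⟨by omega⟩
  obtain ⟨m, rfl⟩ : ∃ m, n = m + 1 := ⟨n - 1, by omega⟩
  simp only [Nat.add_sub_cancel]
  apply le_antisymm
  · apply csSup_le
    · exact ⟨0, ∅, by simp⟩
    · rintro k ⟨S, rfl, hS⟩
      have hinj : S.card ≤ (Finset.univ : Finset (Fin m → Fin q)).card := by
        apply Finset.card_le_card_of_injOn (fun x i => x i.succ - x 0)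
        · intro x _; exact Finset.mem_univ _
        · intro x hx y hy hxy
          by_contra hne
          have h1 := hS x hx y hy hne
          obtain ⟨j, hj⟩ := Finset.card_pos.mp (by omega : 0 < (Finset.univ.filter (fun i => x i = y i)).card)
          simp only [Finset.mem_filter] at hj
          have hj' := hj.2
          have key : x 0 = y 0 := by
            rcases Fin.eq_zero_or_eq_succ j with h0 | ⟨i, rfl⟩
            · rwa [h0] at hj'
            · have h2 := congrFun hxy i
              simp only at h2
              rw [hj'] at h2
              exact sub_right_injective h2
          apply hne
          funext k
          rcases Fin.eq_zero_or_eq_succ k with h0 | ⟨i, rfl⟩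
          · rw [h0]; exact key
          · have h2 := congrFun hxy i
            simp only at h2
            rw [key] at h2
            exact sub_left_injective h2
      simpa using hinj
  · apply le_csSup
    · refine ⟨q ^ (m + 1), ?_⟩
      rintro k ⟨S, rfl, _⟩
      calc S.card ≤ Fintype.card (Fin (m+1) → Fin q) := S.card_le_univ
        _ = q ^ (m + 1) := by simp
    · refine ⟨(Finset.univ : Finset (Fin m → Fin q)).image (fun g => Fin.cons 0 g), ?_, ?_⟩
      · rw [Finset.card_image_of_injective _ (Fin.cons_right_injective 0), Finset.card_univ]
        simp
      · intro x hx y hy _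
        simp only [Finset.mem_image, Finset.mem_univ, true_and] at hx hy
        obtain ⟨g, rfl⟩ := hx
        obtain ⟨h, rfl⟩ := hy
        rw [Nat.one_le_iff_ne_zero, ← Nat.pos_iff_ne_zero, Finset.card_pos]
        exact ⟨0, by simp⟩
end
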